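/- arXiv:2201.04749 — 4 statements merged into one kernel-verified Lean document; each statement's English description precedes it below -/
import Mathlib

section
/- Let T be a finite rooted tree in which every non-leaf vertex has at least two children, and suppose T has n ≥ 2 leaves. Then there exists a path P in T starting at the root r (an r-path) such that every connected component of T with the vertices of P deleted has at most n/2 leaves. -/
open scoped Classical

/-- A finite rooted tree given by a parent function: the root is its own parent,
and every vertex reaches the root by iterating `parent`. -/
structure ParentTree (V : Type*) where
  root : V
  parent : V → V
  parent_root : parent root = root
  reaches_root : ∀ v : V, ∃ n : ℕ, parent^[n] v = root

namespace ParentTree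

variable {V : Type*} [Fintype V] [DecidableEq V]

/-- The children of a vertex. -/
def children (T : ParentTree V) (v : V) : Finset V :=
  Finset.univ.filter fun u => u ≠ T.root ∧ T.parent u = v

/-- Leaves: vertices with no children. -/
def leaves (T : ParentTree V) : Finset V :=
  Finset.univ.filter fun v => T.children v = ∅

/-- `u` is an ancestor of `v` (possibly `u = v`). -/
def IsAncestor (T : ParentTree V) (u v : V) : Prop :=
  ∃ n : ℕ, T.parent^[n] v = u

/-- The leaves of `T` lying in the subtree rooted at `u`. -/
noncomputable def descLeaves (T : ParentTree V) (u : V) : Finset V :=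
  T.leaves.filter fun v => T.IsAncestor u v

/-- An `r`-path: a path in the tree starting at the root, i.e. a nonempty
descending list of vertices beginning with the root. -/
def IsRPath (T : ParentTree V) (P : List V) : Prop :=
  P ≠ [] ∧ P.head? = some T.root ∧ P.Chain' fun a b => b ∈ T.children a

end ParentTree

namespace ParentTree

variable {V : Type*} [Fintype V] [DecidableEq V] (T : ParentTree V)

noncomputable def depth (v : V) : ℕ := Nat.find (T.reaches_root v)

lemma depth_spec (v : V) : T.parent^[T.depth v] v = T.root := Nat.find_spec (T.reaches_root v)

variable {T}

lemma depth_eq_zero_iff {v : V} : T.depth v = 0 ↔ v = T.root := by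
  constructor
  · intro h
    have := T.depth_spec v
    rwa [h, Function.iterate_zero, id_eq] at this
  · intro h
    subst h
    exact Nat.le_zero.mp (Nat.find_le (by simp))

lemma mem_children_iff {u v : V} : u ∈ T.children v ↔ u ≠ T.root ∧ T.parent u = v := by
  simp [children]

lemma depth_parent_lt {v : V} (h : v ≠ T.root) : T.depth (T.parent v) < T.depth v := by
  have h0 : T.depth v ≠ 0 := fun hz => h (depth_eq_zero_iff.mp hz)
  have hs : T.parent^[T.depth v - 1] (T.parent v) = T.root := by
    rw [← Function.iterate_succ_apply, Nat.succ_eq_add_one, Nat.sub_add_cancel (Nat.one_le_iff_ne_zero.mpr h0)]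
    exact T.depth_spec v
  calc T.depth (T.parent v) ≤ T.depth v - 1 := Nat.find_le hs
    _ < T.depth v := Nat.sub_lt (Nat.pos_of_ne_zero h0) one_pos

lemma depth_parent_le (v : V) : T.depth (T.parent v) ≤ T.depth v := by
  by_cases h : v = T.root
  · subst h; rw [T.parent_root]
  · exact (depth_parent_lt h).le

lemma depth_iterate_le (n : ℕ) (v : V) : T.depth (T.parent^[n] v) ≤ T.depth v := by
  induction n with
  | zero => simp
  | succ n ih =>
      rw [Function.iterate_succ_apply']
      exact (depth_parent_le _).trans ih

lemma depth_ancestor_le {u v : V} (h : T.IsAncestor u v) : T.depth u ≤ T.depth v := by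
  obtain ⟨n, rfl⟩ := h; exact depth_iterate_le n v

lemma ancestor_refl (v : V) : T.IsAncestor v v := ⟨0, rfl⟩

lemma ancestor_eq_of_depth_le {u v : V} (h : T.IsAncestor u v) (hd : T.depth v ≤ T.depth u) :
    u = v := by
  obtain ⟨n, rfl⟩ := h
  cases n with
  | zero => rfl
  | succ n =>
      by_cases hv : v = T.root
      · subst hv
        simp [Function.iterate_fixed T.parent_root]
      · exfalso
        have h1 : T.depth (T.parent^[n+1] v) ≤ T.depth (T.parent v) := by
          rw [Function.iterate_succ_apply]
          exact depth_iterate_le n _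
        have h2 := depth_parent_lt (T := T) hv
        omega

lemma depth_child {c v : V} (hc : c ∈ T.children v) : T.depth c = T.depth v + 1 := by
  obtain ⟨hcr, hp⟩ := mem_children_iff.mp hc
  have h1 : T.depth v < T.depth c := hp ▸ depth_parent_lt hcr
  have h2 : T.depth c ≤ T.depth v + 1 := by
    apply Nat.find_le
    rw [Function.iterate_succ_apply, hp]
    exact T.depth_spec v
  omega

lemma ancestor_comparable {c₁ c₂ w : V} (h1 : T.IsAncestor c₁ w) (h2 : T.IsAncestor c₂ w) :
    T.IsAncestor c₁ c₂ ∨ T.IsAncestor c₂ c₁ := by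
  obtain ⟨m, rfl⟩ := h1
  obtain ⟨n, hn⟩ := h2
  rcases le_total m n with h | h
  · right
    exact ⟨n - m, by rw [← Function.iterate_add_apply, ← hn]; congr 1; omega⟩
  · left
    exact ⟨m - n, by rw [← hn, ← Function.iterate_add_apply]; congr 1; omega⟩

lemma children_ancestor_eq {c₁ c₂ v w : V} (h1 : c₁ ∈ T.children v) (h2 : c₂ ∈ T.children v)
    (ha1 : T.IsAncestor c₁ w) (ha2 : T.IsAncestor c₂ w) : c₁ = c₂ := by
  have hd : T.depth c₁ = T.depth c₂ := by rw [depth_child h1, depth_child h2]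
  rcases ancestor_comparable ha1 ha2 with h | h
  · exact ancestor_eq_of_depth_le h hd.ge
  · exact (ancestor_eq_of_depth_le h hd.le).symm

lemma ancestor_step {v w : V} (h : T.IsAncestor v w) (hne : w ≠ v) :
    ∃ c ∈ T.children v, T.IsAncestor c w := by
  obtain ⟨n, hn⟩ := h
  induction n generalizing w with
  | zero => exact absurd hn hne
  | succ n ih =>
      set c := T.parent^[n] w with hc
      by_cases hcv : c = v
      · exact ih hne hcv
      · have hpc : T.parent c = v := by
          rw [hc, ← Function.iterate_succ_apply' T.parent n w]
          exact hn
        have hcr : c ≠ T.root := by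
          intro h0
          apply hcv
          rw [h0] at hpc ⊢
          rw [T.parent_root] at hpc
          exact hpc
        exact ⟨c, mem_children_iff.mpr ⟨hcr, hpc⟩, ⟨n, rfl⟩⟩

lemma descLeaves_subset_of_child {c v : V} (hc : c ∈ T.children v) :
    T.descLeaves c ⊆ T.descLeaves v := by
  intro w hw
  rw [descLeaves, Finset.mem_filter] at hw ⊢
  obtain ⟨hl, n, hn⟩ := hw
  obtain ⟨_, hp⟩ := mem_children_iff.mp hc
  exact ⟨hl, n + 1, by rw [Function.iterate_succ_apply', hn, hp]⟩

lemma descLeaves_subset_leaves (v : V) : T.descLeaves v ⊆ T.leaves :=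
  Finset.filter_subset _ _

/-- the subtree of descendants -/
noncomputable def subtree (T : ParentTree V) (v : V) : Finset V :=
  Finset.univ.filter fun w => T.IsAncestor v w

lemma subtree_card_lt {c v : V} (hc : c ∈ T.children v) :
    (T.subtree c).card < (T.subtree v).card := by
  apply Finset.card_lt_card
  constructor
  · intro w hw
    simp only [subtree, Finset.mem_filter, Finset.mem_univ, true_and] at hw ⊢
    obtain ⟨n, hn⟩ := hw
    obtain ⟨_, hp⟩ := mem_children_iff.mp hc
    exact ⟨n + 1, by rw [Function.iterate_succ_apply', hn, hp]⟩
  · intro hsub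
    have hv : v ∈ T.subtree v := by simp [subtree, ancestor_refl]
    have := hsub hv
    simp only [subtree, Finset.mem_filter, Finset.mem_univ, true_and] at this
    have := depth_ancestor_le this
    have := depth_child hc
    omega

lemma descLeaves_nonempty (v : V) : (T.descLeaves v).Nonempty := by
  generalize hm : (T.subtree v).card = m
  induction m using Nat.strong_induction_on generalizing v with
  | _ m ih =>
    by_cases h : T.children v = ∅
    · refine ⟨v, ?_⟩
      simp [descLeaves, leaves, h, ancestor_refl]
    · obtain ⟨c, hc⟩ := Finset.nonempty_iff_ne_empty.mpr h
      subst hm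
      obtain ⟨w, hw⟩ := ih _ (subtree_card_lt hc) c rfl
      exact ⟨w, descLeaves_subset_of_child hc hw⟩

lemma disjoint_descLeaves {c₁ c₂ v : V} (h1 : c₁ ∈ T.children v) (h2 : c₂ ∈ T.children v)
    (hne : c₁ ≠ c₂) : Disjoint (T.descLeaves c₁) (T.descLeaves c₂) := by
  rw [Finset.disjoint_left]
  intro w hw1 hw2
  rw [descLeaves, Finset.mem_filter] at hw1 hw2
  exact hne (children_ancestor_eq h1 h2 hw1.2 hw2.2)

/-- heavy child -/
noncomputable def heavy (T : ParentTree V) (v : V) : V :=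
  if h : (T.children v).Nonempty then
    ((T.children v).exists_max_image (fun u => (T.descLeaves u).card) h).choose
  else v

lemma heavy_mem {v : V} (h : (T.children v).Nonempty) : T.heavy v ∈ T.children v := by
  rw [heavy, dif_pos h]
  exact ((T.children v).exists_max_image (fun u => (T.descLeaves u).card) h).choose_spec.1

lemma heavy_max {v : V} (h : (T.children v).Nonempty) {u : V} (hu : u ∈ T.children v) :
    (T.descLeaves u).card ≤ (T.descLeaves (T.heavy v)).card := by
  rw [heavy, dif_pos h]
  exact ((T.children v).exists_max_image (fun u => (T.descLeaves u).card) h).choose_spec.2 u hu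

noncomputable def rpath (T : ParentTree V) (v : V) : List V :=
  if h : (T.children v).Nonempty then v :: T.rpath (T.heavy v)
  else [v]
termination_by (T.subtree v).card
decreasing_by exact subtree_card_lt (heavy_mem h)

lemma rpath_ne_nil (v : V) : T.rpath v ≠ [] := by
  rw [rpath]; split <;> simp

lemma rpath_head (v : V) : (T.rpath v).head? = some v := by
  rw [rpath]; split <;> simp

lemma rpath_chain (v : V) : (T.rpath v).Chain' fun a b => b ∈ T.children a := by
  generalize hm : (T.subtree v).card = m
  induction m using Nat.strong_induction_on generalizing v with
  | _ m ih =>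
    rw [rpath]
    split
    case isTrue h =>
      subst hm
      rw [List.Chain', List.isChain_cons]
      refine ⟨?_, ih _ (subtree_card_lt (heavy_mem h)) _ rfl⟩
      intro y hy
      rw [rpath_head] at hy
      cases hy
      exact heavy_mem h
    case isFalse h => exact List.isChain_singleton _

lemma rpath_key (v : V) : ∀ p ∈ T.rpath v, ∀ u ∈ T.children p, u ∉ T.rpath v →
    2 * (T.descLeaves u).card ≤ (T.descLeaves v).card := by
  generalize hm : (T.subtree v).card = m
  induction m using Nat.strong_induction_on generalizing v with
  | _ m ih =>
    subst hm
    intro p hp u hu hnu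
    rw [rpath] at hp hnu
    by_cases h : (T.children v).Nonempty
    · rw [dif_pos h] at hp hnu
      rw [List.mem_cons] at hp
      rw [List.mem_cons] at hnu
      push_neg at hnu
      rcases hp with rfl | hp
      · -- u is a child of p, u ≠ heavy p
        have hune : u ≠ T.heavy p := by
          intro h0
          apply hnu.2
          rw [h0]
          have := rpath_head (T := T) (T.heavy p)
          exact List.mem_of_mem_head? (by rw [this]; rfl)
        have hdisj := disjoint_descLeaves hu (heavy_mem h) hune
        have hsub : T.descLeaves u ∪ T.descLeaves (T.heavy p) ⊆ T.descLeaves p :=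
          Finset.union_subset (descLeaves_subset_of_child hu)
            (descLeaves_subset_of_child (heavy_mem h))
        have hcard := Finset.card_le_card hsub
        rw [Finset.card_union_of_disjoint hdisj] at hcard
        have := heavy_max h hu
        omega
      · have hrec := ih _ (subtree_card_lt (heavy_mem h)) _ rfl p hp u hu hnu.2
        have hle := Finset.card_le_card (descLeaves_subset_of_child (heavy_mem h))
        omega
    · rw [dif_neg h] at hp hnu
      simp only [List.mem_singleton] at hp
      subst hp
      exact absurd hu (by simpa [Finset.not_nonempty_iff_eq_empty.mp h] using hu)

end ParentTree

/-- If every non-leaf vertex of a rooted tree `T` has at least two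
children and `T` has `n ≥ 2` leaves, there is an `r`-path `P` such that every
connected component of `T` minus `P` (such a component is the subtree rooted
at a vertex `u ∉ P` whose parent lies in `P`) has at most `n/2` leaves. -/
theorem stmt0 {V : Type*} [Fintype V] [DecidableEq V] (T : ParentTree V)
    (hbranch : ∀ v : V, T.children v ≠ ∅ → 2 ≤ (T.children v).card)
    (hn : 2 ≤ T.leaves.card) :
    ∃ P : List V, T.IsRPath P ∧
      ∀ u : V, u ∉ P → T.parent u ∈ P →
        2 * (T.descLeaves u).card ≤ T.leaves.card := by
  refine ⟨T.rpath T.root, ⟨T.rpath_ne_nil _, T.rpath_head _, T.rpath_chain _⟩, ?_⟩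
  intro u hu hpu
  have hur : u ≠ T.root := by
    intro h; subst h
    exact hu (List.mem_of_mem_head? (by rw [T.rpath_head]; rfl))
  have huc : u ∈ T.children (T.parent u) := ParentTree.mem_children_iff.mpr ⟨hur, rfl⟩
  have := T.rpath_key T.root _ hpu u huc hu
  calc 2 * (T.descLeaves u).card ≤ (T.descLeaves T.root).card := this
    _ ≤ T.leaves.card := Finset.card_le_card (T.descLeaves_subset_leaves _)
end

section
/- If a graph G has F-width at most w with respect to the family C_k of graphs of clique-width at most k (i.e., G is a w-probe C_k-graph), then the clique-width of G is at most k·2^w. -/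
/-!
Take a `k`-expression for the supergraph `H` and refine the label of each vertex `v` by the set
`S v` of indices `i` with `v ∈ N i` (at most `2 ^ w` choices). A join of the labels `i`, `j`
becomes the joins of `(i, S)` with `(j, T)` over disjoint `S`, `T`, and a relabelling `i → j`
becomes the relabellings `(i, S) → (j, S)`. The new expression generates exactly the edges of `H`
whose ends lie in no common `N i`, and these are the edges of `G`, because each `N i` is
independent in `G` and covers every edge of `H` missing from `G`.
-/


/-- A `k`-expression: create a labeled vertex, disjoint union, join `η_{i,j}`
adding all edges between label classes `i` and `j`, and relabel `ρ_{i→j}`. -/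
inductive KExpr (k : ℕ) : Type
  | vert (v : ℕ) (i : Fin k) : KExpr k
  | union (a b : KExpr k) : KExpr k
  | join (i j : Fin k) (t : KExpr k) : KExpr k
  | relabel (i j : Fin k) (t : KExpr k) : KExpr k

namespace KExpr

/-- The vertices of the generated graph together with their current labels. -/
def labels {k : ℕ} : KExpr k → List (ℕ × Fin k)
  | .vert v i => [(v, i)]
  | .union a b => labels a ++ labels b
  | .join _ _ t => labels t
  | .relabel i j t => (labels t).map fun p => if p.2 = i then (p.1, j) else p

/-- The edges of the generated graph. -/
def edges {k : ℕ} : KExpr k → List (ℕ × ℕ)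
  | .vert _ _ => []
  | .union a b => edges a ++ edges b
  | .join i j t =>
      ((labels t).flatMap fun p => (labels t).filterMap fun q =>
        if p.2 = i ∧ q.2 = j ∧ p.1 ≠ q.1 then some (p.1, q.1) else none) ++ edges t
  | .relabel _ _ t => edges t

/-- Well-formedness: unions are over disjoint vertex sets and joins use two
distinct labels. -/
def WF {k : ℕ} : KExpr k → Prop
  | .vert _ _ => True
  | .union a b => WF a ∧ WF b ∧ ∀ p ∈ labels a, ∀ q ∈ labels b, p.1 ≠ q.1
  | .join i j t => i ≠ j ∧ WF t
  | .relabel _ _ t => WF t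

end KExpr

/-- The `k`-expression `e` generates the graph `G`. -/
def Generates {k : ℕ} {V : Type} [Fintype V] (e : KExpr k) (G : SimpleGraph V) : Prop :=
  ∃ f : V → ℕ, Function.Injective f ∧
    (∀ v : V, f v ∈ (KExpr.labels e).map Prod.fst) ∧
    (∀ x ∈ (KExpr.labels e).map Prod.fst, ∃ v : V, f v = x) ∧
    ∀ u v : V, G.Adj u v ↔ ((f u, f v) ∈ KExpr.edges e ∨ (f v, f u) ∈ KExpr.edges e)

/-- `G` has clique-width at most `k`. -/
def CliqueWidthLE {V : Type} [Fintype V] (G : SimpleGraph V) (k : ℕ) : Prop :=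
  ∃ e : KExpr k, KExpr.WF e ∧ Generates e G

/-- `G` has `F`-width at most `w`: there are `w` independent sets `N₁,…,N_w` of
`G` and a graph `H ∈ F` on the same vertices such that `G` is a spanning
subgraph of `H` and every edge of `H` not in `G` lies inside some `N_i`. -/
def FWidthLE {V : Type} (G : SimpleGraph V) (F : SimpleGraph V → Prop) (w : ℕ) : Prop :=
  ∃ (N : Fin w → Set V) (H : SimpleGraph V), F H ∧ G ≤ H ∧
    (∀ i : Fin w, ∀ u ∈ N i, ∀ v ∈ N i, ¬ G.Adj u v) ∧
    (∀ u v : V, H.Adj u v → ¬ G.Adj u v → ∃ i : Fin w, u ∈ N i ∧ v ∈ N i)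

namespace KExpr

variable {K : ℕ}

lemma mem_edges_join {i j : Fin K} {t : KExpr K} {a b : ℕ} :
    (a, b) ∈ (join i j t).edges ↔
      ((a, i) ∈ t.labels ∧ (b, j) ∈ t.labels ∧ a ≠ b) ∨ (a, b) ∈ t.edges := by
  simp only [edges, List.mem_append, List.mem_flatMap, List.mem_filterMap,
    Option.ite_none_right_eq_some, Option.some.injEq, Prod.mk.injEq]
  constructor
  · rintro (⟨p, hp, q, hq, ⟨hpi, hqj, hpq⟩, rfl, rfl⟩ | h)
    · subst hpi hqj
      exact Or.inl ⟨hp, hq, hpq⟩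
    · exact Or.inr h
  · rintro (⟨ha, hb, hab⟩ | h)
    · exact Or.inl ⟨_, ha, _, hb, ⟨rfl, rfl, hab⟩, rfl, rfl⟩
    · exact Or.inr h

def joinAll (L : List (Fin K × Fin K)) (t : KExpr K) : KExpr K :=
  L.foldr (fun r s => join r.1 r.2 s) t

def relabelAll (L : List (Fin K × Fin K)) (t : KExpr K) : KExpr K :=
  L.foldr (fun r s => relabel r.1 r.2 s) t

/-- The label map of `relabelAll L`; the last pair of `L` acts first. -/
def relabelFn (L : List (Fin K × Fin K)) (c : Fin K) : Fin K :=
  L.foldr (fun r c => if c = r.1 then r.2 else c) c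

@[simp]
lemma labels_joinAll (L : List (Fin K × Fin K)) (t : KExpr K) :
    (joinAll L t).labels = t.labels := by
  induction L with
  | nil => rfl
  | cons r L ih => exact ih

lemma mem_edges_joinAll {L : List (Fin K × Fin K)} {t : KExpr K} {a b : ℕ} :
    (a, b) ∈ (joinAll L t).edges ↔
      (∃ r ∈ L, (a, r.1) ∈ t.labels ∧ (b, r.2) ∈ t.labels ∧ a ≠ b) ∨ (a, b) ∈ t.edges := by
  induction L with
  | nil => simp [joinAll]
  | cons r L ih =>
    rw [joinAll, List.foldr_cons, mem_edges_join, ← joinAll, labels_joinAll, ih]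
    simp only [List.mem_cons, exists_eq_or_imp, or_assoc]

lemma WF.joinAll {L : List (Fin K × Fin K)} {t : KExpr K} (hL : ∀ r ∈ L, r.1 ≠ r.2)
    (ht : t.WF) : (joinAll L t).WF := by
  induction L with
  | nil => exact ht
  | cons r L ih => exact ⟨hL r List.mem_cons_self, ih fun s hs => hL s (List.mem_cons_of_mem _ hs)⟩

lemma labels_relabelAll (L : List (Fin K × Fin K)) (t : KExpr K) :
    (relabelAll L t).labels = t.labels.map fun p => (p.1, relabelFn L p.2) := by
  induction L with
  | nil => simp [relabelAll, relabelFn]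
  | cons r L ih =>
    rw [relabelAll, List.foldr_cons, labels, ← relabelAll, ih, List.map_map]
    refine List.map_congr_left fun p _ => ?_
    simp only [Function.comp_apply, relabelFn, List.foldr_cons]
    split_ifs <;> rfl

@[simp]
lemma edges_relabelAll (L : List (Fin K × Fin K)) (t : KExpr K) :
    (relabelAll L t).edges = t.edges := by
  induction L with
  | nil => rfl
  | cons r L ih => exact ih

lemma WF.relabelAll {t : KExpr K} (L : List (Fin K × Fin K)) (ht : t.WF) :
    (relabelAll L t).WF := by
  induction L with
  | nil => exact ht
  | cons r L ih => exact ih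

variable {k : ℕ} {σ : Type*}

/-- Replace every label `i` by `enc (i, τ v)`, with `τ v` the colour of the vertex `v`, and let a
join only connect vertices whose colours are related by `R`. -/
noncomputable def refineBy [Fintype σ] (enc : Fin k × σ → Fin K) (R : σ → σ → Prop)
    [DecidableRel R] (τ : ℕ → σ) : KExpr k → KExpr K
  | vert v i => vert v (enc (i, τ v))
  | union a b => union (refineBy enc R τ a) (refineBy enc R τ b)
  | join i j t => joinAll ((Finset.univ.filter fun p : σ × σ => R p.1 p.2).toList.map
      fun p => (enc (i, p.1), enc (j, p.2))) (refineBy enc R τ t)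
  | relabel i j t => relabelAll (Finset.univ.toList.map fun S => (enc (i, S), enc (j, S)))
      (refineBy enc R τ t)

variable {enc : Fin k × σ → Fin K} (henc : Function.Injective enc)
include henc

lemma relabelFn_map_enc [DecidableEq σ] (i j ℓ : Fin k) (S : σ) (L : List σ) :
    relabelFn (L.map fun T => (enc (i, T), enc (j, T))) (enc (ℓ, S)) =
      enc (if ℓ = i ∧ S ∈ L then j else ℓ, S) := by
  induction L with
  | nil => simp [relabelFn]
  | cons T L ih =>
    rw [List.map_cons, relabelFn, List.foldr_cons, ← relabelFn, ih]
    by_cases hℓ : ℓ = i <;> by_cases hT : S = T <;> simp_all [henc.eq_iff]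

variable [Fintype σ] {R : σ → σ → Prop} [DecidableRel R] {τ : ℕ → σ}

lemma labels_refineBy (e : KExpr k) :
    (refineBy enc R τ e).labels = e.labels.map fun p => (p.1, enc (p.2, τ p.1)) := by
  induction e with
  | vert v i => rfl
  | union a b iha ihb => simp [refineBy, labels, iha, ihb]
  | join i j t ih => rw [refineBy, labels_joinAll, ih, labels]
  | relabel i j t ih =>
    rw [refineBy, labels_relabelAll, ih, labels, List.map_map, List.map_map]
    refine List.map_congr_left fun p _ => ?_
    classical
    simp only [Function.comp_apply, relabelFn_map_enc henc, Finset.mem_toList, Finset.mem_univ,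
      and_true]
    split_ifs <;> rfl

lemma mem_labels_refineBy {e : KExpr k} {a : ℕ} {ℓ : Fin k} {S : σ} :
    (a, enc (ℓ, S)) ∈ (refineBy enc R τ e).labels ↔ (a, ℓ) ∈ e.labels ∧ τ a = S := by
  simp [labels_refineBy henc, henc.eq_iff, and_comm]

lemma mem_edges_refineBy {e : KExpr k} {a b : ℕ} :
    (a, b) ∈ (refineBy enc R τ e).edges ↔ (a, b) ∈ e.edges ∧ R (τ a) (τ b) := by
  induction e with
  | vert v i => simp [refineBy, edges]
  | union x y ihx ihy =>
    simp only [refineBy, edges, List.mem_append, ihx, ihy, or_and_right]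
  | join i j t ih =>
    simp only [refineBy, mem_edges_joinAll, List.mem_map, Finset.mem_toList, Finset.mem_filter,
      Finset.mem_univ, true_and, ih, mem_edges_join]
    have hjoin : (∃ r, (∃ p : σ × σ, R p.1 p.2 ∧ (enc (i, p.1), enc (j, p.2)) = r) ∧
          (a, r.1) ∈ (refineBy enc R τ t).labels ∧ (b, r.2) ∈ (refineBy enc R τ t).labels ∧
            a ≠ b) ↔ ((a, i) ∈ t.labels ∧ (b, j) ∈ t.labels ∧ a ≠ b) ∧ R (τ a) (τ b) := by
      constructor
      · rintro ⟨_, ⟨⟨S, T⟩, hR, rfl⟩, ha, hb, hab⟩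
        obtain ⟨ha', rfl⟩ := (mem_labels_refineBy henc).1 ha
        obtain ⟨hb', rfl⟩ := (mem_labels_refineBy henc).1 hb
        exact ⟨⟨ha', hb', hab⟩, hR⟩
      · rintro ⟨⟨ha, hb, hab⟩, hR⟩
        exact ⟨_, ⟨(τ a, τ b), hR, rfl⟩, (mem_labels_refineBy henc).2 ⟨ha, rfl⟩,
          (mem_labels_refineBy henc).2 ⟨hb, rfl⟩, hab⟩
    rw [hjoin, or_and_right]
  | relabel i j t ih => rw [refineBy, edges_relabelAll, ih, edges]

lemma WF.refineBy {e : KExpr k} (he : e.WF) : (refineBy enc R τ e).WF := by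
  induction e with
  | vert v i => trivial
  | union x y ihx ihy =>
    refine ⟨ihx he.1, ihy he.2.1, ?_⟩
    simp only [labels_refineBy henc, List.mem_map]
    rintro _ ⟨p, hp, rfl⟩ _ ⟨q, hq, rfl⟩
    exact he.2.2 p hp q hq
  | join i j t ih =>
    refine WF.joinAll ?_ (ih he.2)
    simp only [List.mem_map]
    rintro _ ⟨p, -, rfl⟩ h
    exact he.1 (congrArg Prod.fst (henc h))
  | relabel i j t ih => exact WF.relabelAll _ (ih he)

end KExpr

theorem CliqueWidthLE.of_adj_iff_adj_and {V : Type} [Fintype V] {G H : SimpleGraph V} {k : ℕ}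
    {σ : Type*} [Fintype σ] [Nonempty σ] {R : σ → σ → Prop} [Std.Symm R] (c : V → σ)
    (hH : CliqueWidthLE H k) (hG : ∀ u v, G.Adj u v ↔ H.Adj u v ∧ R (c u) (c v)) :
    CliqueWidthLE G (k * Fintype.card σ) := by
  classical
  obtain ⟨e, he, f, hf, hf_mem, hf_surj, hH_adj⟩ := hH
  let enc : Fin k × σ ≃ Fin (k * Fintype.card σ) :=
    Fintype.equivFinOfCardEq (by rw [Fintype.card_prod, Fintype.card_fin])
  let τ : ℕ → σ := Function.extend f c fun _ => Classical.arbitrary σ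
  have hτ (v : V) : τ (f v) = c v := hf.extend_apply c _ v
  have hvertices : (KExpr.refineBy enc R τ e).labels.map Prod.fst = e.labels.map Prod.fst := by
    rw [KExpr.labels_refineBy enc.injective, List.map_map]
    rfl
  refine ⟨KExpr.refineBy enc R τ e, he.refineBy enc.injective, f, hf, hvertices ▸ hf_mem,
    hvertices ▸ hf_surj, fun u v => ?_⟩
  rw [hG, hH_adj, KExpr.mem_edges_refineBy enc.injective, KExpr.mem_edges_refineBy enc.injective,
    hτ, hτ, or_and_right, comm (r := R) (a := c v)]

/-- The colour `c v` is the set of indices `i` with `v ∈ N i`. -/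
theorem FWidthLE.exists_adj_iff_adj_and_disjoint {V : Type} {G : SimpleGraph V}
    {F : SimpleGraph V → Prop} {w : ℕ} (h : FWidthLE G F w) :
    ∃ H, F H ∧ ∃ c : V → Finset (Fin w), ∀ u v, G.Adj u v ↔ H.Adj u v ∧ Disjoint (c u) (c v) := by
  classical
  obtain ⟨N, H, hF, hGH, hN_indep, hN_cover⟩ := h
  refine ⟨H, hF, fun v => Finset.univ.filter (v ∈ N ·), fun u v => ?_⟩
  simp only [Finset.disjoint_filter, Finset.mem_univ, forall_const]
  constructor
  · intro huv
    exact ⟨hGH huv, fun i hu hv => hN_indep i u hu v hv huv⟩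
  · rintro ⟨huv, hdisj⟩
    by_contra hG
    obtain ⟨i, hu, hv⟩ := hN_cover u v huv hG
    exact hdisj i hu hv

/-- If `G` is a `w`-probe `C_k`-graph (it has `F`-width at most `w`
with respect to the family of graphs of clique-width at most `k`), then the
clique-width of `G` is at most `k·2^w`. -/
theorem stmt10 {V : Type} [Fintype V] (G : SimpleGraph V) (k w : ℕ)
    (h : FWidthLE G (fun H => CliqueWidthLE H k) w) :
    CliqueWidthLE G (k * 2 ^ w) := by
  obtain ⟨H, hH, c, hG⟩ := h.exists_adj_iff_adj_and_disjoint
  have := hH.of_adj_iff_adj_and c hG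
  rwa [Fintype.card_finset, Fintype.card_fin] at this
end

section
/- In the recursive caterpillar-based balanced decomposition of a rooted tree T with n leaves, the collating procedure groups the small subtrees hanging off the chosen r-path P into super-bushes each having at most n/2 leaves, and, except for a bounded number of exceptional groups, each super-bush has at least n/4 leaves; consequently the total number of subtrees (large subtrees plus super-bushes) attached to P is bounded by a constant independent of n. -/
/-- Greedy collating: accumulate consecutive bushes while the group sum stays ≤ n/2. -/
def collate (n : ℕ) : List ℕ → List ℕ → List (List ℕ)
  | acc, [] => [acc]
  | acc, x :: xs =>
    if 2 * (acc.sum + x) ≤ n then collate n (acc ++ [x]) xs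
    else acc :: collate n [x] xs

lemma collate_flatten (n : ℕ) (xs : List ℕ) : ∀ acc, (collate n acc xs).flatten = acc ++ xs := by
  induction xs with
  | nil => intro acc; simp [collate]
  | cons x xs ih =>
    intro acc
    unfold collate
    split
    · rw [ih]; simp
    · simp [List.flatten, ih]

lemma collate_small (n : ℕ) (xs : List ℕ) (hx : ∀ x ∈ xs, 4 * x < n) :
    ∀ acc, 2 * acc.sum ≤ n → ∀ g ∈ collate n acc xs, 2 * g.sum ≤ n := by
  induction xs with
  | nil => intro acc hacc g hg; simp [collate] at hg; subst hg; exact hacc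
  | cons x xs ih =>
    intro acc hacc g hg
    have hx' : ∀ y ∈ xs, 4 * y < n := fun y hy => hx y (List.mem_cons_of_mem _ hy)
    have hxn : 4 * x < n := hx x List.mem_cons_self
    unfold collate at hg
    split at hg
    · exact ih hx' _ (by simpa using ‹2 * (acc.sum + x) ≤ n›) g hg
    · rcases List.mem_cons.1 hg with rfl | hg
      · exact hacc
      · exact ih hx' [x] (by simp; omega) g hg

lemma collate_countP (n : ℕ) (xs : List ℕ) (hx : ∀ x ∈ xs, 4 * x < n) :
    ∀ acc, (collate n acc xs).countP (fun g => decide (4 * g.sum < n)) ≤ 1 := by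
  induction xs with
  | nil => intro acc; simp [collate, List.countP_cons]; split <;> simp
  | cons x xs ih =>
    intro acc
    have hx' : ∀ y ∈ xs, 4 * y < n := fun y hy => hx y (List.mem_cons_of_mem _ hy)
    have hxn : 4 * x < n := hx x List.mem_cons_self
    unfold collate
    split
    · exact ih hx' _
    · rename_i h
      rw [List.countP_cons]
      have hd : (decide (4 * acc.sum < n)) = false := by simp; omega
      rw [hd]
      simpa using ih hx' [x]

lemma count_big (n : ℕ) (gs : List (List ℕ)) :
    n * gs.countP (fun g => decide (n ≤ 4 * g.sum)) ≤ 4 * (gs.map List.sum).sum := by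
  induction gs with
  | nil => simp
  | cons g gs ih =>
    rw [List.countP_cons]
    simp only [List.map_cons, List.sum_cons]
    by_cases h : n ≤ 4 * g.sum
    · simp only [h, decide_eq_true_eq, if_pos]
      rw [Nat.mul_add, Nat.mul_one]
      omega
    · have : (decide (n ≤ 4 * g.sum)) = false := by simpa using h
      rw [this]
      simp only [Bool.false_eq_true, if_false, Nat.add_zero]
      omega

/-- (Abstract form of the collating procedure.) There is an
absolute constant `C` such that: for every `n > 0` and every list `l` of leaf
counts of the small subtrees (bushes) hanging off the `r`-path — each bush
having fewer than `n/4` leaves and their total at most `n` — the bushes can be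
grouped (consecutively) into super-bushes, each with at most `n/2` leaves, such
that the number of exceptional super-bushes with fewer than `n/4` leaves is at
most `C`, and consequently the total number of super-bushes is at most `C`. -/
theorem stmt16 :
    ∃ C : ℕ, ∀ (n : ℕ) (l : List ℕ), 0 < n →
      (∀ x ∈ l, 4 * x < n) → l.sum ≤ n →
      ∃ gs : List (List ℕ), gs.flatten = l ∧
        (∀ g ∈ gs, 2 * g.sum ≤ n) ∧
        gs.countP (fun g => decide (4 * g.sum < n)) ≤ C ∧
        gs.length ≤ C := by
  refine ⟨5, fun n l hn hx hs => ?_⟩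
  refine ⟨collate n [] l, by simpa using collate_flatten n l [], collate_small n l hx [] (by simp), ?_, ?_⟩
  · exact le_trans (collate_countP n l hx []) (by norm_num)
  · set gs := collate n [] l with hgs
    have hflat : gs.flatten = l := by simpa using collate_flatten n l []
    have h1 : gs.countP (fun g => decide (4 * g.sum < n)) ≤ 1 := collate_countP n l hx []
    have h2 : n * gs.countP (fun g => decide (n ≤ 4 * g.sum)) ≤ 4 * (gs.map List.sum).sum :=
      count_big n gs
    have h3 : (gs.map List.sum).sum = l.sum := by rw [← List.sum_flatten, hflat]
    have h4 : gs.countP (fun g => decide (n ≤ 4 * g.sum)) ≤ 4 := by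
      refine Nat.le_of_mul_le_mul_left ?_ hn
      calc n * gs.countP (fun g => decide (n ≤ 4 * g.sum)) ≤ 4 * (gs.map List.sum).sum := h2
        _ ≤ n * 4 := by omega
    have h5 := List.length_eq_countP_add_countP (fun g : List ℕ => decide (4 * g.sum < n)) (l := gs)
    have h6 : gs.countP (fun g => decide ¬(decide (4 * List.sum g < n)) = true) =
        gs.countP (fun g => decide (n ≤ 4 * g.sum)) := by
      apply List.countP_congr
      intro g _
      simp only [decide_eq_true_eq, decide_not, Bool.not_eq_true', decide_eq_false_iff_not,
        Nat.not_lt]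
    omega
end

section
/- In a graph G constructed by a k-expression via a proper union tree T, two distinct leaves (vertices) u and v are adjacent in G if and only if, at their lowest common ancestor x in T, the decorator d_x contains a join operation η between the label c_x(u) of u and the label c_x(v) of v (labels taken just before applying d_x, with all relabels in d_x regarded as applied after joins). -/
/-- An operation of a `k`-expression decorator: a join `η_{i,j}` or a relabel `ρ_{i→j}`. -/
inductive Op (k : ℕ) : Type
  | join (i j : Fin k) : Op k
  | relabel (i j : Fin k) : Op k
  deriving DecidableEq

/-- State: the current labeling of the vertices (a list of (vertex, label) pairs)
together with the list of edges created so far. -/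
abbrev LState (k : ℕ) := List (ℕ × Fin k) × List (ℕ × ℕ)

/-- Apply one operation: a join `η_{i,j}` adds all edges between the label
classes `i` and `j`; a relabel `ρ_{i→j}` changes every label `i` to `j`. -/
def applyOp {k : ℕ} (st : LState k) : Op k → LState k
  | .join i j =>
      (st.1,
        (st.1.flatMap fun p => st.1.filterMap fun q =>
          if p.2 = i ∧ q.2 = j ∧ p.1 ≠ q.1 then some (p.1, q.1) else none) ++ st.2)
  | .relabel i j =>
      (st.1.map fun p => if p.2 = i then (p.1, j) else p, st.2)

/-- Run a list of operations on a state. -/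
def runOps {k : ℕ} (st : LState k) (ops : List (Op k)) : LState k :=
  ops.foldl applyOp st

/-- The generated graph: the symmetrized set of edges. -/
def edgeSet (E : List (ℕ × ℕ)) : Set (ℕ × ℕ) :=
  {p | p ∈ E ∨ (p.2, p.1) ∈ E}

def Op.isJoin {k : ℕ} : Op k → Bool
  | .join _ _ => true
  | .relabel _ _ => false

def Op.isRelabel {k : ℕ} : Op k → Bool
  | .join _ _ => false
  | .relabel _ _ => true

/-- `o` is the join operation `η_{i,j}` (recall `η_{i,j} = η_{j,i}`). -/
def Op.isJoinOf {k : ℕ} (o : Op k) (i j : Fin k) : Prop :=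
  o = Op.join i j ∨ o = Op.join j i

/-- A union tree of width `k`: leaves are labeled vertices, internal nodes are
disjoint unions decorated with a sequence of join/relabel operations. -/
inductive UTree (k : ℕ) : Type
  | leaf (v : ℕ) (i : Fin k) : UTree k
  | node (d : List (Op k)) (l r : UTree k) : UTree k

/-- Evaluate a union tree: the current labeling of its vertices and the list of
edges of the generated graph. -/
def UTree.run {k : ℕ} : UTree k → LState k
  | .leaf v i => ([(v, i)], [])
  | .node d l r =>
      runOps ((run l).1 ++ (run r).1, (run l).2 ++ (run r).2) d

lemma fst_applyOp {k : ℕ} (st : LState k) (o : Op k) :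
    ((applyOp st o).1.map Prod.fst) = st.1.map Prod.fst := by
  cases o with
  | join i j => rfl
  | relabel i j =>
    simp only [applyOp, List.map_map]
    refine List.map_congr_left fun p _ => ?_
    by_cases h : p.2 = i <;> simp [h]

lemma fst_runOps {k : ℕ} (ops : List (Op k)) (st : LState k) :
    ((runOps st ops).1.map Prod.fst) = st.1.map Prod.fst := by
  induction ops generalizing st with
  | nil => rfl
  | cons o rest ih => rw [runOps, List.foldl_cons, ← runOps, ih, fst_applyOp]

lemma joins_fst {k : ℕ} (ops : List (Op k)) (st : LState k)
    (h : ∀ o ∈ ops, o.isJoin = true) : (runOps st ops).1 = st.1 := by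
  induction ops generalizing st with
  | nil => rfl
  | cons o rest ih =>
    rw [runOps, List.foldl_cons, ← runOps, ih _ (fun o ho => h o (by simp [ho]))]
    cases o with
    | join i j => rfl
    | relabel i j => simpa [Op.isJoin] using h (Op.relabel i j) List.mem_cons_self

lemma relabels_snd {k : ℕ} (ops : List (Op k)) (st : LState k)
    (h : ∀ o ∈ ops, o.isRelabel = true) : (runOps st ops).2 = st.2 := by
  induction ops generalizing st with
  | nil => rfl
  | cons o rest ih =>
    rw [runOps, List.foldl_cons, ← runOps, ih _ (fun o ho => h o (by simp [ho]))]
    cases o with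
    | join i j => simpa [Op.isRelabel] using h (Op.join i j) List.mem_cons_self
    | relabel i j => rfl

lemma mem_applyOp_join_snd {k : ℕ} (st : LState k) (i j : Fin k) (u v : ℕ) :
    (u, v) ∈ (applyOp st (.join i j)).2 ↔
      ((u, i) ∈ st.1 ∧ (v, j) ∈ st.1 ∧ u ≠ v) ∨ (u, v) ∈ st.2 := by
  simp only [applyOp, List.mem_append, List.mem_flatMap, List.mem_filterMap]
  constructor
  · rintro (⟨p, hp, q, hq, hpq⟩ | h)
    · split at hpq
      · rename_i hc
        obtain ⟨h1, h2, h3⟩ := hc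
        obtain ⟨hu, hv⟩ := Prod.mk.injEq .. ▸ Option.some.injEq .. ▸ hpq
        refine Or.inl ⟨?_, ?_, ?_⟩
        · rwa [← hu, ← h1, Prod.mk.eta]
        · rwa [← hv, ← h2, Prod.mk.eta]
        · rw [← hu, ← hv]; exact h3
      · simp at hpq
    · exact Or.inr h
  · rintro (⟨h1, h2, h3⟩ | h)
    · exact Or.inl ⟨(u, i), h1, (v, j), h2, by simp [h3]⟩
    · exact Or.inr h

lemma joins_edge_iff {k : ℕ} (u v : ℕ) (ops : List (Op k)) (st : LState k)
    (h : ∀ o ∈ ops, o.isJoin = true) :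
    ((u, v) ∈ (runOps st ops).2 ↔ (u, v) ∈ st.2 ∨
      ∃ i j : Fin k, Op.join i j ∈ ops ∧ (u, i) ∈ st.1 ∧ (v, j) ∈ st.1 ∧ u ≠ v) := by
  induction ops generalizing st with
  | nil => simp [runOps]
  | cons o rest ih =>
    cases o with
    | relabel i j => simpa [Op.isJoin] using h (Op.relabel i j) List.mem_cons_self
    | join i j =>
      rw [runOps, List.foldl_cons, ← runOps,
        ih _ (fun o ho => h o (by simp [ho]))]
      have h1 : (applyOp st (.join i j)).1 = st.1 := rfl
      rw [h1, mem_applyOp_join_snd]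
      constructor
      · rintro ((⟨ha, hb, hc⟩ | he) | ⟨i', j', hm, ha, hb, hc⟩)
        · exact Or.inr ⟨i, j, by simp, ha, hb, hc⟩
        · exact Or.inl he
        · exact Or.inr ⟨i', j', by simp [hm], ha, hb, hc⟩
      · rintro (he | ⟨i', j', hm, ha, hb, hc⟩)
        · exact Or.inl (Or.inr he)
        · rcases List.mem_cons.mp hm with heq | hm'
          · obtain ⟨rfl, rfl⟩ := Op.join.injEq .. ▸ heq
            exact Or.inl (Or.inl ⟨ha, hb, hc⟩)
          · exact Or.inr ⟨i', j', hm', ha, hb, hc⟩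

lemma edges_runOps {k : ℕ} (ops : List (Op k)) (st : LState k) {a b : ℕ}
    (h : (a, b) ∈ (runOps st ops).2) :
    (a ∈ st.1.map Prod.fst ∧ b ∈ st.1.map Prod.fst) ∨ (a, b) ∈ st.2 := by
  induction ops generalizing st with
  | nil => exact Or.inr h
  | cons o rest ih =>
    rw [runOps, List.foldl_cons, ← runOps] at h
    rcases ih _ h with h' | h'
    · rw [fst_applyOp] at h'; exact Or.inl h'
    · cases o with
      | join i j =>
        rcases (mem_applyOp_join_snd st i j a b).mp h' with ⟨h1, h2, _⟩ | h3
        · exact Or.inl ⟨List.mem_map_of_mem h1, List.mem_map_of_mem h2⟩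
        · exact Or.inr h3
      | relabel i j => exact Or.inr h'

lemma edges_run {k : ℕ} (t : UTree k) {a b : ℕ} (h : (a, b) ∈ (UTree.run t).2) :
    a ∈ (UTree.run t).1.map Prod.fst ∧ b ∈ (UTree.run t).1.map Prod.fst := by
  induction t with
  | leaf v i => simp [UTree.run] at h
  | node d l r ihl ihr =>
    rw [UTree.run, fst_runOps]
    rcases edges_runOps d _ h with h' | h'
    · exact h'
    · rcases List.mem_append.mp h' with h'' | h''
      · obtain ⟨h1, h2⟩ := ihl h''
        simp only [List.map_append, List.mem_append]
        exact ⟨Or.inl h1, Or.inl h2⟩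
      · obtain ⟨h1, h2⟩ := ihr h''
        simp only [List.map_append, List.mem_append]
        exact ⟨Or.inr h1, Or.inr h2⟩

lemma eq_snd_of_nodup {α β : Type*} {V : List (α × β)} (h : (V.map Prod.fst).Nodup)
    {a : α} {b c : β} (h1 : (a, b) ∈ V) (h2 : (a, c) ∈ V) : b = c := by
  induction V with
  | nil => simp at h1
  | cons p V ih =>
    simp only [List.map_cons, List.nodup_cons] at h
    rcases List.mem_cons.mp h1 with hx | hx <;> rcases List.mem_cons.mp h2 with hy | hy
    · rw [← hy] at hx; exact (Prod.ext_iff.mp hx).2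
    · subst hx; exact absurd (List.mem_map_of_mem (f := Prod.fst) hy) h.1
    · subst hy; exact absurd (List.mem_map_of_mem (f := Prod.fst) hx) h.1
    · exact ih h.2 hx hy

/-- Let `x = node d l r` be (the subtree of a proper union tree
rooted at) the lowest common ancestor of two distinct vertices `u` (a leaf of
`l`) and `v` (a leaf of `r`), whose labels just before applying the decorator
`d = d_x` are `cu = c_x(u)` and `cv = c_x(v)`.  Assume (as we may) that in `d`
all relabel operations come after all join operations.  Then `u` and `v` are
adjacent in the generated graph if and only if `d` contains a join operation
`η` between the labels `c_x(u)` and `c_x(v)`. -/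
theorem stmt18 {k : ℕ} (d : List (Op k)) (l r : UTree k)
    (hnodup : (((UTree.run l).1 ++ (UTree.run r).1).map Prod.fst).Nodup)
    (hnorm : ∃ djs drs : List (Op k), d = djs ++ drs ∧
      (∀ o ∈ djs, o.isJoin = true) ∧ (∀ o ∈ drs, o.isRelabel = true))
    (u v : ℕ) (cu cv : Fin k)
    (hu : (u, cu) ∈ (UTree.run l).1) (hv : (v, cv) ∈ (UTree.run r).1) :
    ((u, v) ∈ (UTree.run (.node d l r)).2 ∨ (v, u) ∈ (UTree.run (.node d l r)).2)
      ↔ ∃ i j : Fin k, Op.join i j ∈ d ∧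
          ((cu = i ∧ cv = j) ∨ (cu = j ∧ cv = i)) := by
  obtain ⟨djs, drs, rfl, hj, hr⟩ := hnorm
  set V : List (ℕ × Fin k) := (UTree.run l).1 ++ (UTree.run r).1 with hV
  set E : List (ℕ × ℕ) := (UTree.run l).2 ++ (UTree.run r).2 with hE
  -- disjointness of vertex names
  have hdisj : List.Disjoint ((UTree.run l).1.map Prod.fst)
      ((UTree.run r).1.map Prod.fst) := by
    rw [List.map_append] at hnodup
    exact (List.nodup_append'.mp hnodup).2.2
  have huv : u ≠ v := by
    rintro rfl
    exact hdisj (List.mem_map.mpr ⟨(u, cu), hu, rfl⟩) (List.mem_map.mpr ⟨(u, cv), hv, rfl⟩)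
  -- the run of the node, edges after joins
  have hrun : (UTree.run (.node (djs ++ drs) l r)).2 = (runOps (V, E) djs).2 := by
    rw [UTree.run, runOps, List.foldl_append, ← runOps, ← runOps,
      relabels_snd drs _ hr]
  -- initial edges don't connect u and v
  have hnotl : ∀ a b : ℕ, a ∈ ((UTree.run l).1.map Prod.fst) →
      b ∈ ((UTree.run r).1.map Prod.fst) → (a, b) ∉ E := by
    intro a b ha hb hab
    rcases List.mem_append.mp hab with h' | h'
    · exact hdisj (edges_run l h').2 hb
    · exact hdisj ha (edges_run r h').1
  have hu' : u ∈ ((UTree.run l).1.map Prod.fst) := List.mem_map_of_mem hu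
  have hv' : v ∈ ((UTree.run r).1.map Prod.fst) := List.mem_map_of_mem hv
  have hE1 : (u, v) ∉ E := hnotl u v hu' hv'
  have hE2 : (v, u) ∉ E := by
    intro h'
    rcases List.mem_append.mp h' with h'' | h''
    · exact hdisj (edges_run l h'').1 hv'
    · exact hdisj hu' (edges_run r h'').2
  -- uniqueness of labels in V
  have hlabu : ∀ i : Fin k, (u, i) ∈ V → i = cu := fun i hi =>
    eq_snd_of_nodup hnodup hi (List.mem_append_left _ hu)
  have hlabv : ∀ i : Fin k, (v, i) ∈ V → i = cv := fun i hi =>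
    eq_snd_of_nodup hnodup hi (List.mem_append_right _ hv)
  have huV : (u, cu) ∈ V := List.mem_append_left _ hu
  have hvV : (v, cv) ∈ V := List.mem_append_right _ hv
  -- joins in djs ++ drs are exactly joins in djs
  have hmem : ∀ i j : Fin k, (Op.join i j ∈ djs ++ drs ↔ Op.join i j ∈ djs) := by
    intro i j
    constructor
    · intro h'
      rcases List.mem_append.mp h' with h'' | h''
      · exact h''
      · simpa [Op.isRelabel] using hr _ h''
    · exact fun h'' => List.mem_append_left _ h''
  rw [hrun, joins_edge_iff u v djs (V, E) hj, joins_edge_iff v u djs (V, E) hj]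
  constructor
  · rintro ((h' | ⟨i, j, hm, ha, hb, _⟩) | (h' | ⟨i, j, hm, ha, hb, _⟩))
    · exact absurd h' hE1
    · exact ⟨i, j, (hmem i j).mpr hm, Or.inl ⟨(hlabu i ha).symm, (hlabv j hb).symm⟩⟩
    · exact absurd h' hE2
    · exact ⟨i, j, (hmem i j).mpr hm, Or.inr ⟨(hlabu j hb).symm, (hlabv i ha).symm⟩⟩
  · rintro ⟨i, j, hm, ⟨rfl, rfl⟩ | ⟨rfl, rfl⟩⟩
    · exact Or.inl (Or.inr ⟨cu, cv, (hmem cu cv).mp hm, huV, hvV, huv⟩)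
    · exact Or.inr (Or.inr ⟨cv, cu, (hmem cv cu).mp hm, hvV, huV, huv.symm⟩)
end
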